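/- arXiv:2307.12787 — 2 statements merged into one kernel-verified Lean document; each statement's English description precedes it below -/
import Mathlib

section
/- Let X be a compactum. The maps nX : DX → IX and sX : IX → DX are continuous; consequently nX and sX are mutually inverse homeomorphisms and DX is compact. -/
/-- An idempotent (Maslov) probability measure on `X`:
a functional on `C(X, ℝ)` preserving constants, translation by constants,
and finite maxima. -/
def IsIdempotentMeasure {X : Type*} [TopologicalSpace X] (μ : C(X, ℝ) → ℝ) : Prop :=
  μ 1 = 1 ∧
  (∀ (l : ℝ) (φ : C(X, ℝ)), μ (ContinuousMap.const X l + φ) = l + μ φ) ∧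
  (∀ ψ φ : C(X, ℝ), μ (ψ ⊔ φ) = max (μ ψ) (μ φ))
/-- Membership in `DX`: an upper semicontinuous function `X → [-∞, 0]`
attaining the maximal value `0`. -/
def MemD {X : Type*} [TopologicalSpace X] (f : X → EReal) : Prop :=
  UpperSemicontinuous f ∧ (∀ x, f x ≤ 0) ∧ ∃ x, f x = 0
/-- The space `DX` of densities. -/
structure Dspace (X : Type*) [TopologicalSpace X] where
  toFun : X → EReal
  memD : MemD toFun

/-- The topology on `DX` generated by the subbase of sets
`S₋(A,t) = {f : f(a) < t for all a ∈ A}` (`A` closed, `t ∈ [-∞,0]`) and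
`S₊(U,t) = {f : f(a) > t for some a ∈ U}` (`U` open, `t ∈ [-∞,0]`). -/
instance (X : Type*) [TopologicalSpace X] : TopologicalSpace (Dspace X) :=
  TopologicalSpace.generateFrom
    ({S | ∃ (A : Set X) (t : EReal), IsClosed A ∧ t ≤ 0 ∧
        S = {f : Dspace X | ∀ a ∈ A, f.toFun a < t}} ∪
     {S | ∃ (U : Set X) (t : EReal), IsOpen U ∧ t ≤ 0 ∧
        S = {f : Dspace X | ∃ a ∈ U, t < f.toFun a}})
/-- The space `IX` of idempotent measures, topologized as a subspace of `ℝ^{C(X)}`. -/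
abbrev IspX (X : Type*) [TopologicalSpace X] := {μ : C(X, ℝ) → ℝ // IsIdempotentMeasure μ}
/-- The density `sX(μ)` of a functional `μ`:
`sX(μ)(x) = inf { μ(φ) : φ ∈ C(X,(-∞,0]), φ(x) = 0 }`, computed in `ℝ ∪ {-∞}`. -/
noncomputable def sFun {X : Type*} [TopologicalSpace X] (μ : C(X, ℝ) → ℝ) (x : X) : EReal :=
  ⨅ φ : {φ : C(X, ℝ) // (∀ y, φ y ≤ 0) ∧ φ x = 0}, ((μ φ.1 : ℝ) : EReal)

/-! `sX μ (y) ≤ μ φ - φ y` for every test function `φ`, so `(μ, y) ↦ sX μ (y)` is jointly upper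
semicontinuous, and the tube lemma makes the preimages of the sets `S₋(A, t)` open. For `S₊(U, t)`
one uses `nX ∘ sX = id`: `t < sX μ (a)` with `a ∈ U` is witnessed by `r < μ ψ` for an Urysohn
function `ψ ≤ 0` vanishing at `a` and very negative off `U`, and conversely. `IX` is closed in a
product of compact intervals, so `DX = sX (IX)` is compact. Since `X` is regular, `DX` is
Hausdorff, so the continuous bijection `sX` is a homeomorphism and `nX` is continuous. -/

open Filter Topology

theorem EReal.iSup_add_coe {ι : Sort*} (g : ι → EReal) (c : ℝ) :
    (⨆ i, g i) + c = ⨆ i, (g i + c) :=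
  Monotone.map_iSup_of_continuousAt (f := (· + (c : EReal)))
    ((EReal.continuousAt_add (.inr (EReal.coe_ne_bot c)) (.inr (EReal.coe_ne_top c))).comp
      (continuousAt_id.prodMk continuousAt_const))
    (fun _ _ h => add_le_add_left h _) (EReal.bot_add _)

namespace IsIdempotentMeasure

variable {X : Type*} [TopologicalSpace X] {μ : C(X, ℝ) → ℝ}

theorem mono (h : IsIdempotentMeasure μ) : Monotone μ := fun φ ψ hle => by
  have := h.2.2 φ ψ
  rw [sup_eq_right.2 hle] at this
  rw [this]
  exact le_max_left _ _

theorem map_zero (h : IsIdempotentMeasure μ) : μ 0 = 0 := by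
  have := h.2.1 (-1) 1
  rw [show (ContinuousMap.const X (-1 : ℝ) + 1 : C(X, ℝ)) = 0 by ext; simp, h.1] at this
  linarith

theorem map_const (h : IsIdempotentMeasure μ) (l : ℝ) : μ (ContinuousMap.const X l) = l := by
  simpa [h.map_zero] using h.2.1 l 0

theorem nonempty (h : IsIdempotentMeasure μ) : Nonempty X := by
  by_contra hX
  have := h.2.1 1 1
  rw [show (ContinuousMap.const X (1 : ℝ) + 1 : C(X, ℝ)) = 1 from
    ContinuousMap.ext fun x => (hX ⟨x⟩).elim, h.1] at this
  norm_num at this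

theorem map_finset_sup' (h : IsIdempotentMeasure μ) {ι : Type*} {s : Finset ι}
    (hs : s.Nonempty) (g : ι → C(X, ℝ)) : μ (s.sup' hs g) = s.sup' hs (μ ∘ g) :=
  _root_.map_finset_sup' (⟨μ, h.2.2⟩ : SupHom C(X, ℝ) ℝ) hs g

variable [CompactSpace X]

theorem abs_le_norm (h : IsIdempotentMeasure μ) (φ : C(X, ℝ)) : |μ φ| ≤ ‖φ‖ := by
  have hφ : ∀ x, |φ x| ≤ ‖φ‖ := φ.norm_coe_le_norm
  have upper := h.mono (show φ ≤ ContinuousMap.const X ‖φ‖ from fun x => (abs_le.1 (hφ x)).2)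
  have lower := h.mono (show ContinuousMap.const X (-‖φ‖) ≤ φ from fun x => (abs_le.1 (hφ x)).1)
  rw [h.map_const] at upper lower
  exact abs_le.2 ⟨lower, upper⟩

theorem lt_of_forall_exists_lt (h : IsIdempotentMeasure μ) {φ : C(X, ℝ)} {c : ℝ}
    (H : ∀ x, ∃ θ : C(X, ℝ), μ θ < c ∧ φ x < θ x) : μ φ < c := by
  choose θ hθc hθx using H
  obtain ⟨s, hs⟩ := isCompact_univ.elim_finite_subcover (fun x => {y | φ y < θ x y})
    (fun x => isOpen_lt φ.continuous (θ x).continuous) (fun x _ => Set.mem_iUnion.2 ⟨x, hθx x⟩)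
  obtain ⟨x₀⟩ := h.nonempty
  have hs_ne : s.Nonempty := by
    obtain ⟨i, hi, -⟩ := Set.mem_iUnion₂.1 (hs (Set.mem_univ x₀))
    exact ⟨i, hi⟩
  have hφ : φ ≤ s.sup' hs_ne θ := fun y => by
    obtain ⟨i, hi, hy⟩ := Set.mem_iUnion₂.1 (hs (Set.mem_univ y))
    exact hy.le.trans (Finset.le_sup' θ hi y)
  calc μ φ ≤ μ (s.sup' hs_ne θ) := h.mono hφ
    _ = s.sup' hs_ne (μ ∘ θ) := h.map_finset_sup' hs_ne θ
    _ < c := (Finset.sup'_lt_iff hs_ne).2 fun i _ => hθc i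

end IsIdempotentMeasure

theorem isCompact_setOf_isIdempotentMeasure {X : Type*} [TopologicalSpace X] [CompactSpace X] :
    IsCompact {μ : C(X, ℝ) → ℝ | IsIdempotentMeasure μ} := by
  refine (isCompact_univ_pi fun φ : C(X, ℝ) => isCompact_Icc (a := -‖φ‖) (b := ‖φ‖))
    |>.of_isClosed_subset ?_ fun μ hμ φ _ => abs_le.1 (hμ.abs_le_norm φ)
  have h_one : IsClosed {μ : C(X, ℝ) → ℝ | μ 1 = 1} :=
    isClosed_eq (continuous_apply 1) continuous_const
  have h_add : IsClosed {μ : C(X, ℝ) → ℝ |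
      ∀ (l : ℝ) (φ : C(X, ℝ)), μ (ContinuousMap.const X l + φ) = l + μ φ} := by
    simp only [Set.ofPred_forall]
    exact isClosed_iInter fun l => isClosed_iInter fun φ =>
      isClosed_eq (continuous_apply _) (continuous_const.add (continuous_apply φ))
  have h_sup : IsClosed {μ : C(X, ℝ) → ℝ | ∀ ψ φ : C(X, ℝ), μ (ψ ⊔ φ) = max (μ ψ) (μ φ)} := by
    simp only [Set.ofPred_forall]
    exact isClosed_iInter fun ψ => isClosed_iInter fun φ =>
      isClosed_eq (continuous_apply _) ((continuous_apply ψ).max (continuous_apply φ))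
  exact h_one.inter (h_add.inter h_sup)

instance {X : Type*} [TopologicalSpace X] [CompactSpace X] : CompactSpace (IspX X) :=
  isCompact_iff_compactSpace.1 isCompact_setOf_isIdempotentMeasure

section sFun

variable {X : Type*} [TopologicalSpace X] {μ : C(X, ℝ) → ℝ}

theorem sFun_le_apply {x : X} {φ : C(X, ℝ)} (hφ : ∀ y, φ y ≤ 0) (hx : φ x = 0) :
    sFun μ x ≤ μ φ :=
  iInf_le (fun ψ : {φ : C(X, ℝ) // (∀ y, φ y ≤ 0) ∧ φ x = 0} => ((μ ψ.1 : ℝ) : EReal))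
    ⟨φ, hφ, hx⟩

theorem exists_of_sFun_lt {x : X} {t : EReal} (h : sFun μ x < t) :
    ∃ φ : C(X, ℝ), (∀ y, φ y ≤ 0) ∧ φ x = 0 ∧ (μ φ : EReal) < t := by
  obtain ⟨⟨φ, hφ, hx⟩, hlt⟩ := iInf_lt_iff.1 h
  exact ⟨φ, hφ, hx, hlt⟩

namespace IsIdempotentMeasure

theorem sFun_le_zero (h : IsIdempotentMeasure μ) (x : X) : sFun μ x ≤ 0 := by
  simpa [h.map_zero] using sFun_le_apply (μ := μ) (x := x) (φ := 0) (fun _ => le_rfl) rfl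

theorem sFun_le_sub (h : IsIdempotentMeasure μ) (φ : C(X, ℝ)) (y : X) :
    sFun μ y ≤ ((μ φ - φ y : ℝ) : EReal) := by
  set ψ : C(X, ℝ) := ContinuousMap.const X (-φ y) + φ
  calc sFun μ y ≤ μ (ψ ⊓ 0) := sFun_le_apply (fun z => inf_le_right (b := (0 : C(X, ℝ))) z)
        (by simp [ψ])
    _ ≤ μ ψ := EReal.coe_le_coe_iff.2 (h.mono inf_le_left)
    _ = ((μ φ - φ y : ℝ) : EReal) := by rw [h.2.1]; ring_nf

end IsIdempotentMeasure

theorem upperSemicontinuous_sFun :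
    UpperSemicontinuous fun p : IspX X × X => sFun p.1.1 p.2 := by
  rintro ⟨μ, a⟩ t ht
  obtain ⟨φ, -, hφa, hμφ⟩ := exists_of_sFun_lt ht
  obtain ⟨r, hμr, hrt⟩ := EReal.lt_iff_exists_real_btwn.1 hμφ
  have hcont : Continuous fun p : IspX X × X => p.1.1 φ - φ p.2 :=
    ((continuous_apply φ).comp (continuous_subtype_val.comp continuous_fst)).sub
      (φ.continuous.comp continuous_snd)
  have hμa : μ.1 φ - φ a < r := by simpa [hφa] using hμr
  filter_upwards [hcont.continuousAt.eventually_lt continuousAt_const hμa] with p hp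
  exact (p.1.2.sFun_le_sub φ p.2).trans_lt ((EReal.coe_lt_coe_iff.2 hp).trans hrt)

theorem isOpen_setOf_forall_sFun_lt {A : Set X} (hA : IsCompact A) (t : EReal) :
    IsOpen {μ : IspX X | ∀ a ∈ A, sFun μ.1 a < t} :=
  isOpen_iff_mem_nhds.2 fun μ hμ => hA.eventually_forall_of_forall_eventually fun a ha =>
    upperSemicontinuous_sFun (μ, a) t (hμ a ha)

variable [CompactSpace X]

namespace IsIdempotentMeasure

theorem exists_sFun_eq_zero (h : IsIdempotentMeasure μ) : ∃ x, sFun μ x = 0 := by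
  by_contra! hne
  suffices μ 0 < 0 by linarith [h.map_zero]
  refine h.lt_of_forall_exists_lt fun x => ?_
  obtain ⟨φ, -, hφx, hμφ⟩ := exists_of_sFun_lt ((h.sFun_le_zero x).lt_of_ne (hne x))
  have hμφ : μ φ < 0 := by exact_mod_cast hμφ
  refine ⟨ContinuousMap.const X (-μ φ / 2) + φ, ?_, ?_⟩
  · rw [h.2.1]; linarith
  · simp [hφx]; linarith

theorem memD_sFun (h : IsIdempotentMeasure μ) : MemD (sFun μ) :=
  ⟨upperSemicontinuous_sFun.comp (f := fun p : IspX X × X => sFun p.1.1 p.2)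
      (g := fun x => (⟨μ, h⟩, x)) (continuous_const.prodMk continuous_id),
    h.sFun_le_zero, h.exists_sFun_eq_zero⟩

end IsIdempotentMeasure

end sFun

section nFun

variable {X : Type*} [TopologicalSpace X]

noncomputable def nFun (f : X → EReal) (φ : C(X, ℝ)) : EReal :=
  ⨆ x, f x + φ x

theorem le_nFun (f : X → EReal) (φ : C(X, ℝ)) (x : X) : f x + φ x ≤ nFun f φ :=
  le_iSup (fun x => f x + (φ x : EReal)) x

theorem nFun_sup (f : X → EReal) (ψ φ : C(X, ℝ)) :
    nFun f (ψ ⊔ φ) = max (nFun f ψ) (nFun f φ) := by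
  have hmax : ∀ x, f x + ((ψ ⊔ φ) x : ℝ) = max (f x + ψ x) (f x + φ x) := fun x => by
    rw [ContinuousMap.sup_apply, EReal.coe_strictMono.monotone.map_max,
      Monotone.map_max (f := (f x + ·)) fun _ _ h => add_le_add_right h _]
  simp only [nFun, hmax]
  exact iSup_sup_eq

variable {f : X → EReal}

theorem nFun_ne_bot (hf : MemD f) (φ : C(X, ℝ)) : nFun f φ ≠ ⊥ := by
  obtain ⟨x₀, hx₀⟩ := hf.2.2
  have := le_nFun f φ x₀
  rw [hx₀, zero_add] at this
  exact ne_bot_of_le_ne_bot (EReal.coe_ne_bot _) this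

theorem nFun_zero (hf : MemD f) : nFun f 0 = 0 := by
  obtain ⟨x₀, hx₀⟩ := hf.2.2
  simp only [nFun, ContinuousMap.zero_apply, EReal.coe_zero, add_zero]
  exact le_antisymm (iSup_le hf.2.1) (hx₀ ▸ le_iSup f x₀)

theorem nFun_const_add (l : ℝ) (φ : C(X, ℝ)) :
    nFun f (ContinuousMap.const X l + φ) = l + nFun f φ := by
  simp only [nFun, ContinuousMap.add_apply, ContinuousMap.const_apply, EReal.coe_add]
  rw [add_comm (l : EReal), EReal.iSup_add_coe]
  congr 1 with x
  rw [add_comm (l : EReal), add_assoc]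

variable [CompactSpace X]

theorem nFun_le_norm (hf : MemD f) (φ : C(X, ℝ)) : nFun f φ ≤ ‖φ‖ :=
  iSup_le fun x => (add_le_of_nonpos_left (hf.2.1 x)).trans
    (EReal.coe_le_coe_iff.2 ((le_abs_self _).trans (φ.norm_coe_le_norm x)))

theorem coe_toReal_nFun (hf : MemD f) (φ : C(X, ℝ)) : ((nFun f φ).toReal : EReal) = nFun f φ :=
  EReal.coe_toReal (ne_top_of_le_ne_top (EReal.coe_ne_top _) (nFun_le_norm hf φ))
    (nFun_ne_bot hf φ)

theorem isIdempotentMeasure_toReal_nFun (hf : MemD f) :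
    IsIdempotentMeasure fun φ => (nFun f φ).toReal := by
  refine ⟨?_, fun l φ => ?_, fun ψ φ => ?_⟩ <;> apply EReal.coe_injective
  · rw [coe_toReal_nFun hf,
      show (1 : C(X, ℝ)) = ContinuousMap.const X (1 : ℝ) + 0 by ext; simp,
      nFun_const_add, nFun_zero hf, add_zero]
  · rw [coe_toReal_nFun hf, nFun_const_add, EReal.coe_add, coe_toReal_nFun hf]
  · rw [coe_toReal_nFun hf, nFun_sup, EReal.coe_strictMono.monotone.map_max,
      coe_toReal_nFun hf, coe_toReal_nFun hf]

end nFun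

theorem exists_continuous_nonpos_of_isOpen {X : Type*} [TopologicalSpace X] [NormalSpace X]
    [T1Space X] {U : Set X} (hU : IsOpen U) {x : X} (hx : x ∈ U) {t : ℝ} (ht : t ≤ 0) :
    ∃ φ : C(X, ℝ), (∀ y, φ y ≤ 0) ∧ φ x = 0 ∧ ∀ y ∉ U, φ y = t := by
  obtain ⟨g, hg0, hg1, hg01⟩ := exists_continuous_zero_one_of_isClosed isClosed_singleton
    hU.isClosed_compl (Set.disjoint_singleton_left.2 (Set.notMem_compl_iff.2 hx))
  refine ⟨t • g, fun y => ?_, by simp [hg0 rfl], fun y hy => by simp [hg1 hy]⟩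
  simpa using mul_nonpos_of_nonpos_of_nonneg ht (hg01 y).1

theorem Dspace.ext_toFun {X : Type*} [TopologicalSpace X] {f g : Dspace X}
    (h : f.toFun = g.toFun) : f = g := by
  cases f; cases g; cases h; rfl

theorem Dspace.exists_isOpen_disjoint_of_lt {X : Type*} [TopologicalSpace X] [RegularSpace X]
    {f g : Dspace X} {x : X} (hlt : f.toFun x < g.toFun x) :
    ∃ u v : Set (Dspace X), IsOpen u ∧ IsOpen v ∧ f ∈ u ∧ g ∈ v ∧ Disjoint u v := by
  obtain ⟨t, hft, htg⟩ := exists_between hlt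
  obtain ⟨A, hA, hAc, hAt⟩ :=
    exists_mem_nhds_isClosed_subset ((f.memD.1.isOpen_preimage t).mem_nhds hft)
  have ht : t ≤ 0 := (htg.trans_le (g.memD.2.1 x)).le
  refine ⟨{h | ∀ a ∈ A, h.toFun a < t}, {h | ∃ a ∈ interior A, t < h.toFun a},
    TopologicalSpace.isOpen_generateFrom_of_mem (.inl ⟨A, t, hAc, ht, rfl⟩),
    TopologicalSpace.isOpen_generateFrom_of_mem (.inr ⟨_, t, isOpen_interior, ht, rfl⟩),
    fun a ha => hAt ha, ⟨x, mem_interior_iff_mem_nhds.2 hA, htg⟩, ?_⟩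
  exact Set.disjoint_left.2 fun h h1 ⟨a, ha, h2⟩ => (h1 a (interior_subset ha)).not_gt h2

instance {X : Type*} [TopologicalSpace X] [RegularSpace X] : T2Space (Dspace X) := by
  refine ⟨fun f g hfg => ?_⟩
  obtain ⟨x, hx⟩ : ∃ x, f.toFun x ≠ g.toFun x := by
    by_contra! h
    exact hfg (Dspace.ext_toFun (funext h))
  rcases hx.lt_or_gt with hlt | hlt
  · exact Dspace.exists_isOpen_disjoint_of_lt hlt
  · obtain ⟨u, v, hu, hv, hgu, hfv, huv⟩ := Dspace.exists_isOpen_disjoint_of_lt hlt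
    exact ⟨v, u, hv, hu, hfv, hgu, huv.symm⟩

section Maps

variable {X : Type*} [TopologicalSpace X] [CompactSpace X] {μ : C(X, ℝ) → ℝ}

theorem IsIdempotentMeasure.nFun_sFun (h : IsIdempotentMeasure μ) (φ : C(X, ℝ)) :
    nFun (sFun μ) φ = μ φ := by
  refine le_antisymm (iSup_le fun x => ?_) (EReal.le_of_forall_lt_iff_le.1 fun c hc => ?_)
  · calc sFun μ x + φ x ≤ ((μ φ - φ x : ℝ) : EReal) + φ x :=
          add_le_add_left (h.sFun_le_sub φ x) _
      _ = μ φ := by rw [← EReal.coe_add, sub_add_cancel]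
  · refine EReal.coe_le_coe_iff.2 (h.lt_of_forall_exists_lt fun x => ?_).le
    have hx : sFun μ x < ((c - φ x : ℝ) : EReal) := by
      rw [EReal.coe_sub]
      exact (lt_iff_lt_of_le_iff_le (EReal.sub_le_iff_le_add (.inl (EReal.coe_ne_bot _))
        (.inl (EReal.coe_ne_top _)))).2 ((le_nFun _ φ x).trans_lt hc)
    obtain ⟨ψ, -, hψx, hμψ⟩ := exists_of_sFun_lt hx
    have hμψ : μ ψ < c - φ x := by exact_mod_cast hμψ
    refine ⟨ContinuousMap.const X ((φ x + c - μ ψ) / 2) + ψ, ?_, ?_⟩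
    · rw [h.2.1]; linarith
    · simp [hψx]; linarith

theorem sFun_toReal_nFun [T2Space X] {f : X → EReal} (hf : MemD f) (x : X) :
    sFun (fun φ => (nFun f φ).toReal) x = f x := by
  have key := coe_toReal_nFun hf
  refine le_antisymm (EReal.le_of_forall_lt_iff_le.1 fun t ht => ?_) (le_iInf fun ψ => ?_)
  · rcases le_or_gt 0 t with h0 | h0
    · exact ((isIdempotentMeasure_toReal_nFun hf).sFun_le_zero x).trans (by exact_mod_cast h0)
    obtain ⟨φ, hφ, hφx, hφt⟩ :=
      exists_continuous_nonpos_of_isOpen (hf.1.isOpen_preimage t) ht h0.le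
    calc sFun _ x ≤ _ := sFun_le_apply hφ hφx
      _ = nFun f φ := key φ
      _ ≤ t := iSup_le fun y => by
        by_cases hy : f y < t
        · exact (add_le_of_nonpos_right (EReal.coe_nonpos.2 (hφ y))).trans hy.le
        · rw [hφt y hy]
          exact add_le_of_nonpos_left (hf.2.1 y)
  · rw [key]
    simpa [ψ.2.2] using le_nFun f ψ.1 x

theorem isOpen_setOf_exists_lt_sFun [T2Space X] {U : Set X} (hU : IsOpen U) (t : EReal) :
    IsOpen {μ : IspX X | ∃ a ∈ U, t < sFun μ.1 a} := by
  refine isOpen_iff_mem_nhds.2 fun μ ⟨a, ha, hta⟩ => ?_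
  obtain ⟨r, htr, hra⟩ := EReal.lt_iff_exists_real_btwn.1 hta
  have hr : r < 0 := by exact_mod_cast hra.trans_le (μ.2.sFun_le_zero a)
  obtain ⟨ψ, hψ, hψa, hψU⟩ := exists_continuous_nonpos_of_isOpen hU ha (t := r - 1) (by linarith)
  have hμψ : r < μ.1 ψ := EReal.coe_lt_coe_iff.1 (hra.trans_le (sFun_le_apply hψ hψa))
  filter_upwards [(isOpen_lt continuous_const
    ((continuous_apply ψ).comp continuous_subtype_val)).mem_nhds hμψ] with ν hν
  have hνψ : (r : EReal) < nFun (sFun ν.1) ψ :=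
    (ν.2.nFun_sFun ψ).symm ▸ EReal.coe_lt_coe_iff.2 hν
  obtain ⟨x, hx⟩ := lt_iSup_iff.1 hνψ
  have hxU : x ∈ U := by
    by_contra hxU
    refine hx.not_ge ((add_le_of_nonpos_left (ν.2.sFun_le_zero x)).trans ?_)
    rw [hψU x hxU]
    exact EReal.coe_le_coe_iff.2 (by linarith)
  exact ⟨x, hxU, htr.trans (hx.trans_le (add_le_of_nonpos_right (EReal.coe_nonpos.2 (hψ x))))⟩

noncomputable def nMap (f : Dspace X) : IspX X :=
  ⟨fun φ => (nFun f.toFun φ).toReal, isIdempotentMeasure_toReal_nFun f.memD⟩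

noncomputable def sMap (μ : IspX X) : Dspace X :=
  ⟨sFun μ.1, μ.2.memD_sFun⟩

theorem coe_nMap_apply (f : Dspace X) (φ : C(X, ℝ)) :
    (((nMap f).1 φ : ℝ) : EReal) = nFun f.toFun φ :=
  coe_toReal_nFun f.memD φ

theorem nMap_sMap (μ : IspX X) : nMap (sMap μ) = μ :=
  Subtype.ext <| funext fun φ => EReal.coe_injective <|
    (coe_nMap_apply (sMap μ) φ).trans (μ.2.nFun_sFun φ)

theorem sMap_nMap [T2Space X] (f : Dspace X) : sMap (nMap f) = f :=
  Dspace.ext_toFun <| funext <| sFun_toReal_nFun f.memD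

theorem continuous_sMap [T2Space X] : Continuous (sMap : IspX X → Dspace X) := by
  refine continuous_generateFrom_iff.2 ?_
  rintro S (⟨A, t, hA, -, rfl⟩ | ⟨U, t, hU, -, rfl⟩)
  · exact isOpen_setOf_forall_sFun_lt hA.isCompact t
  · exact isOpen_setOf_exists_lt_sFun hU t

end Maps

/-- For a compactum `X`, the maps `nX : DX → IX` and `sX : IX → DX`
(given by their defining formulas) are continuous; consequently they are mutually
inverse homeomorphisms and `DX` is compact. -/
theorem stmt3 {X : Type*} [TopologicalSpace X] [CompactSpace X] [T2Space X] :
    ∃ (n : Dspace X → IspX X) (s : IspX X → Dspace X),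
      (∀ (f : Dspace X) (φ : C(X, ℝ)),
          (((n f).1 φ : ℝ) : EReal) = ⨆ x, f.toFun x + (φ x : EReal)) ∧
      (∀ (μ : IspX X) (x : X), (s μ).toFun x = sFun μ.1 x) ∧
      Continuous n ∧ Continuous s ∧
      Function.LeftInverse n s ∧ Function.LeftInverse s n ∧
      CompactSpace (Dspace X) := by
  let e : IspX X ≃ Dspace X := ⟨sMap, nMap, nMap_sMap, sMap_nMap⟩
  have hs : Continuous e := continuous_sMap
  exact ⟨nMap, sMap, coe_nMap_apply, fun _ _ => rfl, hs.continuous_symm_of_equiv_compact_to_t2,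
    hs, nMap_sMap, sMap_nMap, (hs.homeoOfEquivCompactToT2).compactSpace⟩
end

section
/- Let X be a compactum. The multiplication κ is associative: κX ∘ D(κX) = κX ∘ κ_{DX} as maps D(D(DX)) → DX. Consequently the triple (D, ε, κ) is a monad on the category of compacta. -/
open Classical in
/-- The unit `εX(x) ∈ DX`: `εX(x)(y) = 0` if `y = x` and `-∞` otherwise. -/
noncomputable def epsFun {X : Type*} (x : X) : X → EReal :=
  fun y => if y = x then 0 else ⊥

/-- The multiplication `κX(F)(x) = max{f(x) + F(f) : f ∈ DX}` for `F : DX → [-∞,0]`. -/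
noncomputable def kappaFun (X : Type*) [TopologicalSpace X] (F : Dspace X → EReal) :
    X → EReal :=
  fun x => ⨆ f : Dspace X, f.toFun x + F f

/-!
Both sides of the associativity law send `x` to `⨆ F, κX(F)(x) + G(F)`: on the left the supremum
over `g ∈ DX` and the supremum over the fibre `κX⁻¹(g)` merge into one supremum over `F`, on the
right two suprema are exchanged. Merging needs `κX(F) ∈ DX`, i.e. upper semicontinuity of
`x ↦ ⨆ f, f(x) + F(f)`. This is a tube-lemma argument, since `DX` is compact (Alexander's subbase
theorem) and evaluation `X × DX → [-∞, 0]` is jointly upper semicontinuous for regular `X`.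
The unit laws hold because `εX(x)` is `0` at `x` and `-∞` elsewhere.
-/

open Filter Topology Set

namespace EReal

lemma add_iSup_of_ne_top {ι : Sort*} {a : EReal} (ha : a ≠ ⊤) (g : ι → EReal) :
    a + ⨆ i, g i = ⨆ i, a + g i := by
  induction a with
  | bot => simp
  | top => exact absurd rfl ha
  | coe a =>
    refine Monotone.map_iSup_of_continuousAt (f := ((a : EReal) + ·)) ?_
      (fun _ _ h => add_le_add_right h _) (add_bot _)
    exact (EReal.continuousAt_add (.inl (coe_ne_top a)) (.inl (coe_ne_bot a))).comp
      (Continuous.prodMk_right _).continuousAt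

lemma iSup_add_of_ne_top {ι : Sort*} {a : EReal} (ha : a ≠ ⊤) (g : ι → EReal) :
    (⨆ i, g i) + a = ⨆ i, g i + a := by
  simp only [add_comm _ a, add_iSup_of_ne_top ha]

end EReal

lemma upperSemicontinuous_iSup_of_compactSpace {α β γ : Type*} [TopologicalSpace α]
    [TopologicalSpace β] [CompactSpace β] [CompleteLinearOrder γ] [DenselyOrdered γ]
    {H : α → β → γ} (hH : UpperSemicontinuous fun p : α × β => H p.1 p.2) :
    UpperSemicontinuous fun a => ⨆ b, H a b := by
  intro a t hat
  obtain ⟨t', hat', ht't⟩ := exists_between hat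
  have hev : ∀ᶠ a' in 𝓝 a, ∀ b ∈ univ, H a' b < t' :=
    isCompact_univ.eventually_forall_of_forall_eventually fun b _ =>
      hH (a, b) t' ((le_iSup (H a) b).trans_lt hat')
  filter_upwards [hev] with a' ha' using
    (iSup_le fun b => (ha' b (mem_univ b)).le).trans_lt ht't

section lowerEnvelope

variable {X : Type*}

noncomputable def lowerEnvelope (J : Set (Set X × EReal)) (z : X) : EReal :=
  (⨅ p ∈ J, ⨅ _ : z ∈ p.1, p.2) ⊓ 0

variable {J : Set (Set X × EReal)}

lemma lowerEnvelope_le_zero (z : X) : lowerEnvelope J z ≤ 0 := inf_le_right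

lemma lowerEnvelope_le {p : Set X × EReal} (hp : p ∈ J) {z : X} (hz : z ∈ p.1) :
    lowerEnvelope J z ≤ p.2 :=
  inf_le_left.trans ((iInf₂_le p hp).trans (iInf_le _ hz))

lemma exists_of_lowerEnvelope_lt {z : X} {t : EReal} (ht : t ≤ 0) (h : lowerEnvelope J z < t) :
    ∃ p ∈ J, z ∈ p.1 ∧ p.2 < t := by
  simp only [lowerEnvelope, inf_lt_iff, iInf_lt_iff, exists_prop] at h
  obtain ⟨p, hp, hzp, hpt⟩ | h0 := h
  · exact ⟨p, hp, hzp, hpt⟩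
  · exact absurd ht h0.not_ge

lemma upperSemicontinuous_lowerEnvelope [TopologicalSpace X] (hJ : ∀ p ∈ J, IsOpen p.1) :
    UpperSemicontinuous (lowerEnvelope J) := by
  intro z t hzt
  rcases le_or_gt t 0 with ht | ht
  · obtain ⟨p, hp, hzp, hpt⟩ := exists_of_lowerEnvelope_lt ht hzt
    filter_upwards [(hJ p hp).mem_nhds hzp] with y hy using (lowerEnvelope_le hp hy).trans_lt hpt
  · exact Eventually.of_forall fun y => (lowerEnvelope_le_zero y).trans_lt ht

end lowerEnvelope

namespace Dspace

variable {X : Type*} [TopologicalSpace X]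

lemma le_zero (f : Dspace X) (x : X) : f.toFun x ≤ 0 := f.memD.2.1 x

lemma ne_top (f : Dspace X) (x : X) : f.toFun x ≠ ⊤ :=
  ((f.le_zero x).trans_lt EReal.zero_lt_top).ne

lemma isOpen_setOf_forall_lt {A : Set X} (hA : IsClosed A) {t : EReal} (ht : t ≤ 0) :
    IsOpen {f : Dspace X | ∀ a ∈ A, f.toFun a < t} :=
  TopologicalSpace.isOpen_generateFrom_of_mem (.inl ⟨A, t, hA, ht, rfl⟩)

lemma exists_finite_subfamily {K : Set X} (hK : IsCompact K) {t : EReal}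
    {J : Set (Set X × EReal)} (hJ : ∀ p ∈ J, IsOpen p.1)
    (hKJ : ∀ z ∈ K, ∃ p ∈ J, z ∈ p.1 ∧ p.2 < t) :
    ∃ J' ⊆ J, J'.Finite ∧ ∀ f : Dspace X, (∃ a ∈ K, t ≤ f.toFun a) →
      ∃ p ∈ J', ∃ a ∈ p.1, p.2 < f.toFun a := by
  obtain ⟨J', hJ'J, hfin, hcover⟩ := hK.elim_finite_subcover_image
    (b := {p ∈ J | p.2 < t}) (c := Prod.fst) (fun p hp => hJ p hp.1) fun z hz => by
      obtain ⟨p, hp, hzp, hpt⟩ := hKJ z hz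
      exact mem_biUnion ⟨hp, hpt⟩ hzp
  refine ⟨J', fun p hp => (hJ'J hp).1, hfin, ?_⟩
  rintro f ⟨a, haK, hta⟩
  obtain ⟨p, hp, hap⟩ := mem_iUnion₂.1 (hcover haK)
  exact ⟨p, hp, a, hap, (hJ'J hp).2.trans_le hta⟩

instance [CompactSpace X] : CompactSpace (Dspace X) := by
  refine compactSpace_generateFrom rfl fun P hPS hPcover => ?_
  set plus : Set X × EReal → Set (Dspace X) := fun p => {f | ∃ a ∈ p.1, p.2 < f.toFun a}
  set J : Set (Set X × EReal) := {p | IsOpen p.1 ∧ plus p ∈ P}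
  have hJ : ∀ p ∈ J, IsOpen p.1 := fun p hp => hp.1
  have hplus : ∀ J' ⊆ J, plus '' J' ⊆ P := fun J' hJ' =>
    image_subset_iff.2 fun p hp => (hJ' hp).2
  -- `lowerEnvelope J` lies in no `S₊(U, s)` of the cover; if it attains `0`, it lies in some
  -- `S₋(A, t)` of the cover and compactness of `A` finishes, otherwise compactness of `X` does.
  by_cases hmax : ∃ z, lowerEnvelope J z = 0
  · let g : Dspace X := ⟨_, upperSemicontinuous_lowerEnvelope hJ, lowerEnvelope_le_zero, hmax⟩
    obtain ⟨S, hSP, hgS⟩ := hPcover ▸ mem_univ g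
    rcases hPS hSP with ⟨A, t, hA, ht, rfl⟩ | ⟨U, s, hU, hs, rfl⟩
    · obtain ⟨J', hJ'J, hfin, hJ'⟩ := exists_finite_subfamily hA.isCompact hJ fun a ha =>
        exists_of_lowerEnvelope_lt ht (hgS a ha)
      refine ⟨insert _ (plus '' J'), insert_subset hSP (hplus J' hJ'J),
        (hfin.image plus).insert _, eq_univ_of_forall fun f => ?_⟩
      by_cases hf : ∀ a ∈ A, f.toFun a < t
      · exact mem_sUnion_of_mem (show f ∈ {f : Dspace X | ∀ a ∈ A, f.toFun a < t} from hf)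
          (mem_insert _ _)
      · push Not at hf
        obtain ⟨p, hp, hfp⟩ := hJ' f hf
        exact mem_sUnion_of_mem hfp (mem_insert_of_mem _ (mem_image_of_mem plus hp))
    · obtain ⟨a, haU, hsa⟩ := hgS
      exact absurd (lowerEnvelope_le (show (U, s) ∈ J from ⟨hU, hSP⟩) haU) hsa.not_ge
  · push Not at hmax
    obtain ⟨J', hJ'J, hfin, hJ'⟩ := exists_finite_subfamily isCompact_univ hJ fun z _ =>
      exists_of_lowerEnvelope_lt le_rfl ((lowerEnvelope_le_zero z).lt_of_ne (hmax z))
    refine ⟨plus '' J', hplus J' hJ'J, hfin.image plus, eq_univ_of_forall fun f => ?_⟩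
    obtain ⟨a, ha⟩ := f.memD.2.2
    obtain ⟨p, hp, hfp⟩ := hJ' f ⟨a, mem_univ a, ha.ge⟩
    exact mem_sUnion_of_mem hfp (mem_image_of_mem plus hp)

lemma upperSemicontinuous_eval [RegularSpace X] :
    UpperSemicontinuous fun p : X × Dspace X => p.2.toFun p.1 := by
  rintro ⟨x, f⟩ t hft
  rcases le_or_gt t 0 with ht | ht
  · obtain ⟨t', hft', ht't⟩ := exists_between hft
    obtain ⟨A, hAx, hA, hAsub⟩ := exists_mem_nhds_isClosed_subset (f.memD.1 x t' hft')
    filter_upwards [prod_mem_nhds hAx ((isOpen_setOf_forall_lt hA (ht't.le.trans ht)).mem_nhds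
      fun a ha => hAsub ha)] with p hp using (hp.2 p.1 hp.1).trans ht't
  · exact Eventually.of_forall fun p => (p.2.le_zero p.1).trans_lt ht

end Dspace

lemma epsFun_le_zero {α : Type*} (x y : α) : epsFun x y ≤ 0 := by
  unfold epsFun; split_ifs <;> simp

lemma epsFun_comm {α : Type*} (x y : α) : epsFun x y = epsFun y x := by
  by_cases h : x = y
  · simp [epsFun, h]
  · simp [epsFun, h, Ne.symm h]

lemma iSup_add_epsFun {α : Type*} (φ : α → EReal) (a : α) : ⨆ x, φ x + epsFun a x = φ a := by
  refine le_antisymm (iSup_le fun x => ?_) (le_iSup_of_le a (by simp [epsFun]))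
  by_cases hx : x = a <;> simp [epsFun, hx]

lemma iSup_epsFun_add {α : Type*} (φ : α → EReal) (a : α) : ⨆ x, epsFun x a + φ x = φ a := by
  simp_rw [epsFun_comm _ a, add_comm _ (φ _)]
  exact iSup_add_epsFun φ a

section

variable {X : Type*} [TopologicalSpace X]

lemma memD_epsFun [T1Space X] (x : X) : MemD (epsFun x) := by
  refine ⟨fun z t hzt => ?_, epsFun_le_zero x, x, if_pos rfl⟩
  by_cases hz : z = x
  · replace hzt : 0 < t := by simpa [epsFun, hz] using hzt
    exact Eventually.of_forall fun y => (epsFun_le_zero x y).trans_lt hzt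
  · replace hzt : ⊥ < t := by simpa [epsFun, hz] using hzt
    filter_upwards [isOpen_compl_singleton.mem_nhds hz] with y hy
    rwa [epsFun, if_neg (mem_compl_singleton_iff.1 hy)]

lemma memD_kappaFun [CompactSpace X] [RegularSpace X] {F : Dspace X → EReal} (hF : MemD F) :
    MemD (kappaFun X F) := by
  obtain ⟨hF_usc, hF_le, f, hf⟩ := hF
  have hle : ∀ x, kappaFun X F x ≤ 0 := fun x =>
    iSup_le fun f => add_nonpos (f.le_zero x) (hF_le f)
  refine ⟨upperSemicontinuous_iSup_of_compactSpace ?_, hle, ?_⟩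
  · refine Dspace.upperSemicontinuous_eval.add' (hF_usc.comp continuous_snd)
      fun p => EReal.continuousAt_add ?_ ?_
    · exact .inl (p.2.ne_top p.1)
    · exact .inr ((hF_le p.2).trans_lt EReal.zero_lt_top).ne
  · obtain ⟨x, hx⟩ := f.memD.2.2
    refine ⟨x, (hle x).antisymm ?_⟩
    have := le_iSup (fun f : Dspace X => f.toFun x + F f) f
    rwa [hx, hf, add_zero] at this

lemma kappaFun_iSup_fiber {B : Type*} (k : B → Dspace X) (G : B → EReal) :
    kappaFun X (fun g => ⨆ b ∈ {b | (k b).toFun = g.toFun}, G b) =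
      fun x => ⨆ b, (k b).toFun x + G b := by
  funext x
  refine le_antisymm (iSup_le fun g => ?_) (iSup_le fun b => ?_)
  · simp only [EReal.add_iSup_of_ne_top (g.ne_top x)]
    refine iSup₂_le fun b hb => ?_
    rw [← show (k b).toFun = g.toFun from hb]
    exact le_iSup (fun b => (k b).toFun x + G b) b
  · exact le_iSup_of_le (k b) (add_le_add_right (le_biSup G (show (k b).toFun = _ from rfl)) _)

lemma kappaFun_kappaFun (Φ : Dspace (Dspace X) → EReal) (hΦ : ∀ F, Φ F ≠ ⊤) :
    kappaFun X (kappaFun (Dspace X) Φ) =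
      fun x => ⨆ F : Dspace (Dspace X), kappaFun X F.toFun x + Φ F := by
  funext x
  calc ⨆ f : Dspace X, f.toFun x + ⨆ F : Dspace (Dspace X), F.toFun f + Φ F
      = ⨆ f : Dspace X, ⨆ F : Dspace (Dspace X), f.toFun x + (F.toFun f + Φ F) :=
        iSup_congr fun f => EReal.add_iSup_of_ne_top (f.ne_top x) _
    _ = ⨆ F : Dspace (Dspace X), ⨆ f : Dspace X, f.toFun x + F.toFun f + Φ F := by
        rw [iSup_comm]; simp only [add_assoc]
    _ = ⨆ F : Dspace (Dspace X), kappaFun X F.toFun x + Φ F :=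
        iSup_congr fun F => (EReal.iSup_add_of_ne_top (hΦ F) _).symm

end

-- `D(κX)(G)(g) = max G(κX⁻¹(g))` and `D(εX)(f)(g) = max f(εX⁻¹(g))` appear written out as
-- suprema over the fibres.
/-- For a compactum `X`, the multiplication `κ` is associative:
`κX ∘ D(κX) = κX ∘ κ_{DX}` as maps `D(D(DX)) → DX`.  Together with the unit laws
(restated below) this makes `(D, ε, κ)` a monad on the category of compacta.
(Here `D(κX)(G)(g) = max G(κX⁻¹(g)) = ⨆{G(F) : κX(F) = g}`.) -/
theorem stmt11 {X : Type*} [TopologicalSpace X] [CompactSpace X] [T2Space X] :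
    (∀ G : Dspace (Dspace (Dspace X)),
        kappaFun X
          (fun g : Dspace X =>
            ⨆ F ∈ {F : Dspace (Dspace X) | kappaFun X F.toFun = g.toFun}, G.toFun F) =
        kappaFun X (kappaFun (Dspace X) G.toFun)) ∧
    (∀ f : Dspace X,
        kappaFun X
          (fun g : Dspace X => ⨆ x ∈ {x : X | epsFun x = g.toFun}, f.toFun x) =
        f.toFun) ∧
    (∀ f : Dspace X, kappaFun X (epsFun f) = f.toFun) := by
  refine ⟨fun G => ?_, fun f => ?_, fun f => ?_⟩
  · rw [kappaFun_kappaFun G.toFun G.ne_top]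
    exact kappaFun_iSup_fiber
      (fun F : Dspace (Dspace X) => (⟨_, memD_kappaFun F.memD⟩ : Dspace X)) G.toFun
  · rw [kappaFun_iSup_fiber (fun x : X => (⟨_, memD_epsFun x⟩ : Dspace X)) f.toFun]
    exact funext (iSup_epsFun_add f.toFun)
  · exact funext fun x => iSup_add_epsFun (fun g : Dspace X => g.toFun x) f
end
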